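/- Let τ > 0, T_stim > 0, let I* = 1/(1 − e^{−T_stim/τ}), and suppose 0 < δ_T < 2·I*(I* − 1)/τ. Let f(I) = I + δ_T(τ·ln(I/(I−1)) − T_stim). Then the fixed point I* of f is locally asymptotically stable: there exists ε > 0 such that for every I₀ with |I₀ − I*| < ε, the iterates fⁿ(I₀) are defined for all n and converge to I* as n → ∞. -/

import Mathlib

/-!
The fixed point satisfies `I* / (I* - 1) = exp (T_stim / τ)`, and `f' I = 1 - δ_T τ / (I (I - 1))`,
so the bound on `δ_T` says exactly that `|f' I*| < 1`. A map differentiable at a fixed point with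
derivative of norm `< k < 1` moves nearby points to within `k` times their distance from it; hence
on a small ball the iterates stay in the ball, which lies in `(1, ∞)`, and converge geometrically.
-/

open Filter Topology Metric Real

theorem HasDerivAt.eventually_norm_sub_le {𝕜 F : Type*} [NontriviallyNormedField 𝕜]
    [NormedAddCommGroup F] [NormedSpace 𝕜 F] {f : 𝕜 → F} {f' : F} {x : 𝕜} {k : ℝ}
    (hf : HasDerivAt f f' x) (hk : ‖f'‖ < k) :
    ∀ᶠ y in 𝓝 x, ‖f y - f x‖ ≤ k * ‖y - x‖ := by
  filter_upwards [(hasDerivAt_iff_isLittleO.mp hf).def (sub_pos.mpr hk)] with y hy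
  calc ‖f y - f x‖ ≤ ‖f y - f x - (y - x) • f'‖ + ‖(y - x) • f'‖ := norm_le_norm_sub_add _ _
    _ ≤ (k - ‖f'‖) * ‖y - x‖ + ‖y - x‖ * ‖f'‖ := by grw [hy, norm_smul_le]
    _ = k * ‖y - x‖ := by ring

section Contraction

variable {X : Type*} [PseudoMetricSpace X] {f : X → X} {x₀ y : X} {k ε : ℝ}

theorem iterate_mem_ball_and_dist_le_pow_mul (hk₀ : 0 ≤ k) (hk₁ : k ≤ 1)
    (hf : ∀ y ∈ ball x₀ ε, dist (f y) x₀ ≤ k * dist y x₀) (hy : y ∈ ball x₀ ε) (n : ℕ) :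
    f^[n] y ∈ ball x₀ ε ∧ dist (f^[n] y) x₀ ≤ k ^ n * dist y x₀ := by
  induction n with
  | zero => simpa using hy
  | succ n ih =>
    obtain ⟨hmem, hdist⟩ := ih
    have hstep := hf _ hmem
    rw [Function.iterate_succ_apply']
    refine ⟨?_, ?_⟩
    · rw [mem_ball] at hmem ⊢
      nlinarith [dist_nonneg (x := f^[n] y) (y := x₀)]
    · calc dist (f (f^[n] y)) x₀ ≤ k * (k ^ n * dist y x₀) := by grw [hstep, hdist]
        _ = k ^ (n + 1) * dist y x₀ := by ring

theorem tendsto_iterate_of_dist_le_mul (hk₀ : 0 ≤ k) (hk₁ : k < 1)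
    (hf : ∀ y ∈ ball x₀ ε, dist (f y) x₀ ≤ k * dist y x₀) (hy : y ∈ ball x₀ ε) :
    Tendsto (fun n ↦ f^[n] y) atTop (𝓝 x₀) := by
  rw [tendsto_iff_dist_tendsto_zero]
  refine squeeze_zero (fun _ ↦ dist_nonneg)
    (fun n ↦ (iterate_mem_ball_and_dist_le_pow_mul hk₀ hk₁.le hf hy n).2) ?_
  simpa using (tendsto_pow_atTop_nhds_zero_of_lt_one hk₀ hk₁).mul_const (dist y x₀)

end Contraction

theorem exists_ball_iterate_mem_and_tendsto_of_hasDerivAt {𝕜 : Type*}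
    [NontriviallyNormedField 𝕜] {f : 𝕜 → 𝕜} {f' x₀ : 𝕜} {s : Set 𝕜}
    (hfix : f x₀ = x₀) (hf : HasDerivAt f f' x₀) (hf' : ‖f'‖ < 1) (hs : s ∈ 𝓝 x₀) :
    ∃ ε > 0, ∀ y ∈ ball x₀ ε,
      (∀ n, f^[n] y ∈ s) ∧ Tendsto (fun n ↦ f^[n] y) atTop (𝓝 x₀) := by
  obtain ⟨k, hf'k, hk₁⟩ := exists_between hf'
  have hk₀ : 0 ≤ k := (norm_nonneg f').trans hf'k.le
  obtain ⟨ε, hε, hball⟩ := eventually_nhds_iff_ball.mp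
    ((hf.eventually_norm_sub_le hf'k).and hs)
  have hcontr : ∀ y ∈ ball x₀ ε, dist (f y) x₀ ≤ k * dist y x₀ := fun y hy ↦ by
    simpa only [dist_eq_norm, hfix] using (hball y hy).1
  refine ⟨ε, hε, fun y hy ↦ ⟨fun n ↦ ?_, tendsto_iterate_of_dist_le_mul hk₀ hk₁ hcontr hy⟩⟩
  exact (hball _ (iterate_mem_ball_and_dist_le_pow_mul hk₀ hk₁.le hcontr hy n).1).2

noncomputable def periodMap (τ Tstim δT I : ℝ) : ℝ := I + δT * (τ * log (I / (I - 1)) - Tstim)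

theorem one_div_one_sub_div_sub_one {a : ℝ} (ha₁ : a ≠ 1) :
    1 / (1 - a) / (1 / (1 - a) - 1) = a⁻¹ := by
  have h : 1 - a ≠ 0 := sub_ne_zero.mpr ha₁.symm
  rw [div_sub_one h, sub_sub_cancel, div_div_div_cancel_right₀ h, one_div]

theorem one_lt_one_div_one_sub_exp_neg {c : ℝ} (hc : 0 < c) : 1 < 1 / (1 - exp (-c)) :=
  one_lt_one_div (by linarith [exp_lt_one_iff.mpr (neg_lt_zero.mpr hc)])
    (by linarith [exp_pos (-c)])

theorem periodMap_one_div_one_sub_exp {τ Tstim : ℝ} (δT : ℝ) (hτ : τ ≠ 0) (hTstim : Tstim ≠ 0) :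
    periodMap τ Tstim δT (1 / (1 - exp (-Tstim / τ))) = 1 / (1 - exp (-Tstim / τ)) := by
  have hc : -Tstim / τ ≠ 0 := div_ne_zero (neg_ne_zero.mpr hTstim) hτ
  rw [periodMap, one_div_one_sub_div_sub_one (mt (exp_eq_one_iff _).mp hc), log_inv, log_exp]
  field_simp
  ring

theorem hasDerivAt_periodMap (τ Tstim δT : ℝ) {I : ℝ} (hI : 1 < I) :
    HasDerivAt (periodMap τ Tstim δT) (1 - δT * τ / (I * (I - 1))) I := by
  have hI₀ : I ≠ 0 := by positivity
  have hI₁ : I - 1 ≠ 0 := sub_ne_zero.mpr hI.ne'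
  have hlog : HasDerivAt (fun J ↦ log (J / (J - 1))) (-1 / (I * (I - 1))) I := by
    convert ((hasDerivAt_id' I).fun_div ((hasDerivAt_id' I).sub_const 1) hI₁).log
      (div_ne_zero hI₀ hI₁) using 1
    field_simp
    ring
  exact ((hasDerivAt_id' I).fun_add (((hlog.const_mul τ).sub_const Tstim).const_mul δT)).congr_deriv
    (by ring)

/-- If `0 < δ_T < 2·I*(I* − 1)/τ`, then the fixed point `I*` of the period-correction
map `f` is locally asymptotically stable: for all initial conditions sufficiently close
to `I*`, the iterates of `f` remain defined (stay in `(1,∞)`) and converge to `I*`. -/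
theorem period_map_local_asymptotic_stability
    (τ Tstim : ℝ) (hτ : 0 < τ) (hTstim : 0 < Tstim)
    (Istar : ℝ) (hIstar : Istar = 1 / (1 - Real.exp (-Tstim / τ)))
    (δT : ℝ) (hδT : 0 < δT) (hδT2 : δT < 2 * Istar * (Istar - 1) / τ)
    (f : ℝ → ℝ) (hf : ∀ I, f I = I + δT * (τ * Real.log (I / (I - 1)) - Tstim)) :
    ∃ ε > 0, ∀ I₀ : ℝ, |I₀ - Istar| < ε →
      (∀ n : ℕ, 1 < f^[n] I₀) ∧
      Filter.Tendsto (fun n : ℕ => f^[n] I₀) Filter.atTop (nhds Istar) := by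
  obtain rfl : f = periodMap τ Tstim δT := funext hf
  have hI : 1 < Istar := by
    rw [hIstar, neg_div]
    exact one_lt_one_div_one_sub_exp_neg (div_pos hTstim hτ)
  have hfix : periodMap τ Tstim δT Istar = Istar :=
    hIstar ▸ periodMap_one_div_one_sub_exp δT hτ.ne' hTstim.ne'
  have hslope : ‖1 - δT * τ / (Istar * (Istar - 1))‖ < 1 := by
    have hprod : 0 < Istar * (Istar - 1) := by nlinarith
    have hq₀ : 0 < δT * τ / (Istar * (Istar - 1)) := by positivity
    have hq₂ : δT * τ / (Istar * (Istar - 1)) < 2 := by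
      rw [div_lt_iff₀ hprod]
      linarith [(lt_div_iff₀ hτ).mp hδT2]
    rw [norm_eq_abs, abs_sub_lt_iff]
    constructor <;> linarith
  obtain ⟨ε, hε, hstable⟩ := exists_ball_iterate_mem_and_tendsto_of_hasDerivAt hfix
    (hasDerivAt_periodMap τ Tstim δT hI) hslope (Ioi_mem_nhds hI)
  exact ⟨ε, hε, fun I₀ hI₀ ↦ hstable I₀ (by rwa [mem_ball, dist_eq])⟩
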